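/- arXiv:2207.02535 — 2 statements merged into one kernel-verified Lean document; each statement's English description precedes it below -/
import Mathlib

section
/- Let C be a linear code in F_q^n and let e be an integer with 0 ≤ e ≤ h. Then C is e-Galois LCD if and only if C is (h−e)-Galois LCD, i.e., C ∩ C^{⊥_e} = {0} if and only if C ∩ C^{⊥_{h−e}} = {0}. -/
open Finset

variable {F : Type*}

/-- The `e`-Galois dual of a linear code `C ⊆ F_q^n` (`q = p^h`):
`C^{⊥_e} = {x | ∀ c ∈ C, ∑ i, x i * (c i)^(p^e) = 0}`. -/
def galoisDual [Field F] (p e : ℕ) {n : ℕ} (C : Submodule F (Fin n → F)) :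
    Submodule F (Fin n → F) where
  carrier := {x | ∀ c ∈ C, ∑ i, x i * c i ^ p ^ e = 0}
  add_mem' := by
    intro a b ha hb c hc
    have h1 := ha c hc
    have h2 := hb c hc
    show ∑ i, (a + b) i * c i ^ p ^ e = 0
    simp only [Pi.add_apply, add_mul, Finset.sum_add_distrib, h1, h2, add_zero]
  zero_mem' := by
    intro c hc
    simp
  smul_mem' := by
    intro r a ha c hc
    have h1 := ha c hc
    show ∑ i, (r • a) i * c i ^ p ^ e = 0
    simp only [Pi.smul_apply, smul_eq_mul, mul_assoc, ← Finset.mul_sum, h1, mul_zero]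

/-- The `e`-Galois hull of `C`: `Hull_e(C) = C ∩ C^{⊥_e}`. -/
def galoisHull [Field F] (p e : ℕ) {n : ℕ} (C : Submodule F (Fin n → F)) :
    Submodule F (Fin n → F) :=
  C ⊓ galoisDual p e C

/-- `G` is a generator matrix of `C`: its rows form a basis of `C`. -/
def IsGenMatrix [Field F] {n k : ℕ} (C : Submodule F (Fin n → F))
    (G : Matrix (Fin k) (Fin n) F) : Prop :=
  LinearIndependent F (fun i : Fin k => G i) ∧
    Submodule.span F (Set.range fun i : Fin k => G i) = C

/-- `d` is the minimum (Hamming) distance of the linear code `C`. -/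
def IsMinDist [Field F] [DecidableEq F] {n : ℕ} (C : Submodule F (Fin n → F)) (d : ℕ) : Prop :=
  (∃ c ∈ C, c ≠ 0 ∧ hammingNorm c = d) ∧ ∀ c ∈ C, c ≠ 0 → d ≤ hammingNorm c

/-! With a generator matrix `G` of `C`, the hull `C ∩ C^{⊥_e}` is trivial exactly when the Gram
matrix `G (G^{(p^e)})ᵀ` is nonsingular. Raising the entries of the Gram matrix for `h - e` to the
`p^e`-th power gives the transpose of the Gram matrix for `e`, since `x ↦ x^{p^h}` is the identity
on `F_q`; hence the two determinants vanish together. -/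

open Matrix

section GenMatrix

variable [Field F] {n : ℕ}

theorem exists_isGenMatrix (C : Submodule F (Fin n → F)) :
    ∃ (k : ℕ) (G : Matrix (Fin k) (Fin n) F), IsGenMatrix C G := by
  let b := Module.finBasis F C
  refine ⟨_, fun i => b i, b.linearIndependent.map' C.subtype C.ker_subtype, ?_⟩
  rw [Set.range_comp']
  change Submodule.span F (C.subtype '' _) = C
  rw [← Submodule.map_span, b.span_eq, Submodule.map_top, Submodule.range_subtype]

variable {k : ℕ} {C : Submodule F (Fin n → F)} {G : Matrix (Fin k) (Fin n) F}

theorem IsGenMatrix.mem_iff (hG : IsGenMatrix C G) (x : Fin n → F) :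
    x ∈ C ↔ ∃ a, a ᵥ* G = x := by
  simp only [← hG.2, Submodule.mem_span_range_iff_exists_fun, vecMul_eq_sum]

theorem IsGenMatrix.vecMul_eq_zero_iff (hG : IsGenMatrix C G) (a : Fin k → F) :
    a ᵥ* G = 0 ↔ a = 0 := by
  refine ⟨fun ha => funext (Fintype.linearIndependent_iff.1 hG.1 a ?_), fun ha => ?_⟩
  · rwa [← vecMul_eq_sum]
  · rw [ha, zero_vecMul]

end GenMatrix

section GaloisGram

variable [Field F] (p : ℕ) [ExpChar F p] {k n : ℕ}

def galoisGram (e : ℕ) (G : Matrix (Fin k) (Fin n) F) : Matrix (Fin k) (Fin k) F :=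
  G * (G.map (iterateFrobenius F p e))ᵀ

variable {p} {C : Submodule F (Fin n → F)} {G : Matrix (Fin k) (Fin n) F}

theorem mem_galoisDual_iff_mulVec_eq_zero (hG : IsGenMatrix C G) (e : ℕ) (x : Fin n → F) :
    x ∈ galoisDual p e C ↔ G.map (iterateFrobenius F p e) *ᵥ x = 0 := by
  constructor
  · intro hx
    ext j
    rw [mulVec, dotProduct_comm]
    exact hx (G j) ((hG.mem_iff _).2 ⟨Pi.single j 1, single_one_vecMul j G⟩)
  · rintro hx c hc
    obtain ⟨a, rfl⟩ := (hG.mem_iff c).1 hc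
    have := congrArg (dotProduct (iterateFrobenius F p e ∘ a)) hx
    rw [dotProduct_mulVec, dotProduct_zero] at this
    rw [← this, dotProduct_comm]
    simp only [dotProduct, ← RingHom.map_vecMul, iterateFrobenius_def]

theorem galoisHull_eq_bot_iff_det_galoisGram_ne_zero (hG : IsGenMatrix C G) (e : ℕ) :
    galoisHull p e C = ⊥ ↔ (galoisGram p e G).det ≠ 0 := by
  have hmem : ∀ a, a ᵥ* G ∈ galoisHull p e C ↔ a ᵥ* galoisGram p e G = 0 := fun a => by
    rw [galoisHull, Submodule.mem_inf, mem_galoisDual_iff_mulVec_eq_zero hG, galoisGram,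
      ← vecMul_vecMul, vecMul_transpose, and_iff_right ((hG.mem_iff _).2 ⟨a, rfl⟩)]
  rw [Ne, ← exists_vecMul_eq_zero_iff, Submodule.eq_bot_iff]
  constructor
  · rintro hbot ⟨a, ha, hGram⟩
    exact ha ((hG.vecMul_eq_zero_iff a).1 (hbot _ ((hmem a).2 hGram)))
  · rintro hdet x hx
    obtain ⟨a, rfl⟩ := (hG.mem_iff x).1 (Submodule.mem_inf.1 hx).1
    by_contra hne
    exact hdet ⟨a, fun ha => hne (by rw [ha, zero_vecMul]), (hmem a).1 hx⟩

theorem galoisGram_map_iterateFrobenius {h e : ℕ} (hfix : ∀ a : F, a ^ p ^ h = a) (he : e ≤ h) :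
    (galoisGram p (h - e) G).map (iterateFrobenius F p e) = (galoisGram p e G)ᵀ := by
  have hinv :
      (iterateFrobenius F p e).comp (iterateFrobenius F p (h - e)) = RingHom.id F := by
    ext a
    simp only [RingHom.comp_apply, iterateFrobenius_def, RingHom.id_apply]
    rw [← pow_mul, ← pow_add, Nat.sub_add_cancel he, hfix]
  rw [galoisGram, galoisGram, Matrix.map_mul, transpose_map, Matrix.map_map, transpose_mul,
    transpose_transpose, ← RingHom.coe_comp, hinv, RingHom.coe_id, Matrix.map_id]

theorem det_galoisGram_sub_pow {h e : ℕ} (hfix : ∀ a : F, a ^ p ^ h = a) (he : e ≤ h) :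
    (galoisGram p (h - e) G).det ^ p ^ e = (galoisGram p e G).det := by
  rw [← iterateFrobenius_def, RingHom.map_det, RingHom.mapMatrix_apply,
    galoisGram_map_iterateFrobenius hfix he, det_transpose]

end GaloisGram

theorem galois_LCD_iff_general
    (p h : ℕ) (hp : p.Prime)
    [Field F] [Fintype F] (hcard : Fintype.card F = p ^ h)
    (n e : ℕ) (he : e ≤ h)
    (C : Submodule F (Fin n → F)) :
    galoisHull p e C = ⊥ ↔ galoisHull p (h - e) C = ⊥ := by
  have := Fact.mk hp
  have := charP_of_card_eq_prime_pow (R := F) hcard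
  have hfix : ∀ a : F, a ^ p ^ h = a := hcard ▸ FiniteField.pow_card
  obtain ⟨k, G, hG⟩ := exists_isGenMatrix C
  rw [galoisHull_eq_bot_iff_det_galoisGram_ne_zero hG,
    galoisHull_eq_bot_iff_det_galoisGram_ne_zero hG, ← det_galoisGram_sub_pow hfix he]
  exact pow_ne_zero_iff (pow_ne_zero _ hp.ne_zero)

/-- Theorem: `C` is `e`-Galois LCD iff `C` is `(h-e)`-Galois LCD,
i.e. `C ∩ C^{⊥_e} = {0}` iff `C ∩ C^{⊥_{h-e}} = {0}`. -/
theorem galois_LCD_iff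
    (p h : ℕ) (hp : p.Prime) (hh : 0 < h)
    [Field F] [Fintype F] (hcard : Fintype.card F = p ^ h)
    (n e : ℕ) (he : e ≤ h)
    (C : Submodule F (Fin n → F)) :
    galoisHull p e C = ⊥ ↔ galoisHull p (h - e) C = ⊥ :=
  galois_LCD_iff_general p h hp hcard n e he C
end

section
/- Let C be a k-dimensional linear code in F_q^n, let 0 ≤ e ≤ h−1, and let G be any generator matrix and H be any parity check matrix of C. Then the following six statements are equivalent: (1) C is e-Galois self-dual; (2) C is (h−e)-Galois self-dual; (3) both G·σ^e(G^T) and σ^{h−e}(H)·σ^{2h−2e}(H^T) are zero matrices; (4) both G·σ^e(G^T) and σ^{h−e}(H)·H^T are zero matrices; (5) both G·σ^{h−e}(G^T) and σ^{h−e}(H)·σ^{2h−2e}(H^T) are zero matrices; (6) both G·σ^{h−e}(G^T) and σ^{h−e}(H)·H^T are zero matrices. -/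
open Finset

variable {F : Type*}

/-! Raising `⟨x, y⟩_e = 0` to the `p^(h-e)`-th power gives `⟨y, x⟩_(h-e) = 0`, so a code is
`e`-self-orthogonal iff it is `(h-e)`-self-orthogonal, and each matrix condition says exactly
that `C`, resp. its Euclidean dual `C^⊥₀`, is self-orthogonal. Self-duality is equivalent to
both: if `C = C^{⊥_e}` then `σ^e` maps `C^⊥₀` into `C`, which makes `C^⊥₀` `e`-self-orthogonal;
conversely, since every Galois dual of an `[n, k]` code has dimension `n - k`, the two
inclusions give `k ≤ n - k ≤ k`. -/

theorem Matrix.map_mul_map_eq_zero_iff {R S : Type*} [Semiring R] [Semiring S] {l m n : Type*}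
    [Fintype m] {f : R →+* S} (hf : Function.Injective f) (A : Matrix l m R)
    (B : Matrix m n R) : A.map f * B.map f = 0 ↔ A * B = 0 := by
  rw [← Matrix.map_mul, ← Matrix.map_zero f (map_zero f), (Matrix.map_injective hf).eq_iff]

theorem Matrix.map_mul_transpose_eq_zero_iff {R : Type*} [CommSemiring R] {l m n : Type*}
    [Fintype n] (f : R → R) (A : Matrix l n R) (B : Matrix m n R) :
    A.map f * B.transpose = 0 ↔ B * (A.transpose.map f) = 0 := by
  rw [← Matrix.transpose_eq_zero, Matrix.transpose_mul, Matrix.transpose_transpose,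
    Matrix.transpose_map]

section ExpChar

variable [Field F] {p : ℕ} [ExpChar F p] {n : ℕ}

theorem mem_galoisDual_span_iff {S : Set (Fin n → F)} {e : ℕ} {x : Fin n → F} :
    x ∈ galoisDual p e (Submodule.span F S) ↔ ∀ c ∈ S, ∑ i, x i * c i ^ p ^ e = 0 := by
  refine ⟨fun hx c hc => hx c (Submodule.subset_span hc), fun hx c hc => ?_⟩
  induction hc using Submodule.span_induction with
  | mem c hc => exact hx c hc
  | zero => simp [zero_pow (expChar_pow_pos F p e).ne']
  | add a b _ _ ha hb =>
    simp only [Pi.add_apply, add_pow_expChar_pow, mul_add, Finset.sum_add_distrib, ha, hb,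
      add_zero]
  | smul r a _ ha =>
    simp only [Pi.smul_apply, smul_eq_mul, mul_pow, mul_left_comm _ (r ^ p ^ e),
      ← Finset.mul_sum, ha, mul_zero]

theorem le_galoisDual_iff_mul_eq_zero {a b e : ℕ} {X Y : Submodule F (Fin n → F)}
    {A : Matrix (Fin a) (Fin n) F} {B : Matrix (Fin b) (Fin n) F}
    (hA : Submodule.span F (Set.range fun i => A i) = X)
    (hB : Submodule.span F (Set.range fun i => B i) = Y) :
    X ≤ galoisDual p e Y ↔ A * (B.transpose.map fun x => x ^ p ^ e) = 0 := by
  simp only [← hA, ← hB, Submodule.span_le, Set.range_subset_iff, SetLike.mem_coe,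
    mem_galoisDual_span_iff, Set.forall_mem_range, ← Matrix.ext_iff, Matrix.mul_apply,
    Matrix.map_apply, Matrix.transpose_apply, Matrix.zero_apply]

theorem pow_mem_galoisDual {C : Submodule F (Fin n → F)} {e : ℕ} {x : Fin n → F}
    (hx : x ∈ galoisDual p 0 C) : (fun i => x i ^ p ^ e) ∈ galoisDual p e C := by
  intro c hc
  have hxc : ∑ i, x i * c i = 0 := by simpa using hx c hc
  simpa [mul_pow, sum_pow_char_pow, zero_pow (expChar_pow_pos F p e).ne'] using
    congrArg (· ^ p ^ e) hxc

theorem galoisDual_zero_le_of_eq_galoisDual {C : Submodule F (Fin n → F)} {e : ℕ}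
    (hC : C = galoisDual p e C) :
    galoisDual p 0 C ≤ galoisDual p e (galoisDual p 0 C) := by
  intro d hd d' hd'
  have hmem : (fun i => d' i ^ p ^ e) ∈ C := hC ▸ pow_mem_galoisDual hd'
  simpa using hd _ hmem

theorem map_pow_mul_map_pow_add_eq_zero_iff {l m o : Type*} [Fintype m] (t : ℕ)
    (A : Matrix l m F) (B : Matrix m o F) :
    (A.map fun a => a ^ p ^ t) * (B.map fun a => a ^ p ^ (t + t)) = 0 ↔
      A * (B.map fun a => a ^ p ^ t) = 0 := by
  have hB : (B.map fun a => a ^ p ^ (t + t)) =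
      (B.map fun a => a ^ p ^ t).map (iterateFrobenius F p t) := by
    simp only [Matrix.map_map, Function.comp_def, iterateFrobenius_def, pow_add, pow_mul]
  rw [hB]
  exact Matrix.map_mul_map_eq_zero_iff (iterateFrobenius F p t).injective A _

end ExpChar

section Perfect

variable [Field F] {p : ℕ} [ExpChar F p] [PerfectRing F p] {n : ℕ}

theorem LinearIndependent.map_pow_char_pow {ι : Type*} {v : ι → Fin n → F}
    (hv : LinearIndependent F v) (t : ℕ) :
    LinearIndependent F fun i j => v i j ^ p ^ t :=
  hv.map_of_surjective_injectiveₛ (iterateFrobenius F p t)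
    ((iterateFrobenius F p t).toAddMonoidHom.compLeft (Fin n))
    (bijective_iterateFrobenius F p t).2 ((iterateFrobenius F p t).injective.comp_left)
    fun r m => funext fun j => map_mul (iterateFrobenius F p t) r (m j)

theorem finrank_galoisDual {k e : ℕ} {C : Submodule F (Fin n → F)}
    {G : Matrix (Fin k) (Fin n) F} (hG : IsGenMatrix C G) :
    Module.finrank F (galoisDual p e C) = n - k := by
  set M := G.map fun a => a ^ p ^ e
  have hker : galoisDual p e C = LinearMap.ker M.mulVecLin := by
    ext x
    simp only [← hG.2, mem_galoisDual_span_iff, Set.forall_mem_range, LinearMap.mem_ker,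
      Matrix.mulVecLin_apply, funext_iff, Matrix.mulVec, dotProduct, M, Matrix.map_apply,
      Pi.zero_apply, mul_comm (x _)]
  have hrank : M.rank = k := by
    simpa using (hG.1.map_pow_char_pow e).rank_matrix (M := M)
  have := LinearMap.finrank_range_add_finrank_ker M.mulVecLin
  rw [Module.finrank_fin_fun, ← Matrix.rank, hrank, ← hker] at this
  omega

theorem eq_galoisDual_iff {k e : ℕ} {C : Submodule F (Fin n → F)}
    (hk : Module.finrank F C = k) {G : Matrix (Fin k) (Fin n) F} (hG : IsGenMatrix C G)
    {H : Matrix (Fin (n - k)) (Fin n) F} (hH : IsGenMatrix (galoisDual p 0 C) H) :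
    C = galoisDual p e C ↔
      C ≤ galoisDual p e C ∧ galoisDual p 0 C ≤ galoisDual p e (galoisDual p 0 C) := by
  refine ⟨fun hC => ⟨hC.le, galoisDual_zero_le_of_eq_galoisDual hC⟩, fun ⟨hCC, hDD⟩ => ?_⟩
  have hC := Submodule.finrank_mono hCC
  have hD := Submodule.finrank_mono hDD
  rw [hk, finrank_galoisDual hG] at hC
  rw [finrank_galoisDual hG, finrank_galoisDual hH] at hD
  exact Submodule.eq_of_le_of_finrank_le hCC (by rw [hk, finrank_galoisDual hG]; omega)

end Perfect

theorem FiniteField.charP_of_card_eq_prime_pow [Field F] [Fintype F] {p h : ℕ} (hp : p.Prime)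
    (hcard : Fintype.card F = p ^ h) : CharP F p := by
  obtain ⟨q, hq, m, hq_prime, hcard'⟩ := FiniteField.card' F
  have hqp : q ∣ p :=
    hq_prime.dvd_of_dvd_pow (hcard ▸ hcard' ▸ dvd_pow_self q m.ne_zero : q ∣ p ^ h)
  rwa [(Nat.prime_dvd_prime_iff_eq hq_prime hp).mp hqp] at hq

theorem FiniteField.pow_pow_pow_sub [Field F] [Fintype F] {p h : ℕ}
    (hcard : Fintype.card F = p ^ h) {e : ℕ} (he : e ≤ h) (a : F) :
    (a ^ p ^ e) ^ p ^ (h - e) = a := by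
  rw [← pow_mul, ← pow_add, Nat.add_sub_cancel' he, ← hcard, FiniteField.pow_card]

section FiniteField

variable [Field F] [Fintype F] {p h : ℕ} [ExpChar F p]

theorem sum_mul_pow_sub_eq_zero (hcard : Fintype.card F = p ^ h) {e : ℕ} (he : e ≤ h)
    {ι : Type*} {s : Finset ι} {x y : ι → F} (hxy : ∑ i ∈ s, x i * y i ^ p ^ e = 0) :
    ∑ i ∈ s, y i * x i ^ p ^ (h - e) = 0 := by
  simpa [sum_pow_char_pow, mul_pow, FiniteField.pow_pow_pow_sub hcard he, mul_comm,
    zero_pow (expChar_pow_pos F p (h - e)).ne'] using congrArg (· ^ p ^ (h - e)) hxy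

theorem le_galoisDual_comm (hcard : Fintype.card F = p ^ h) {e n : ℕ} (he : e ≤ h)
    {X Y : Submodule F (Fin n → F)} (hXY : X ≤ galoisDual p e Y) :
    Y ≤ galoisDual p (h - e) X :=
  fun _ hy _ hx => sum_mul_pow_sub_eq_zero hcard he (hXY hx _ hy)

theorem le_galoisDual_sub_iff (hcard : Fintype.card F = p ^ h) {e n : ℕ} (he : e ≤ h)
    {X Y : Submodule F (Fin n → F)} :
    X ≤ galoisDual p (h - e) Y ↔ Y ≤ galoisDual p e X := by
  refine ⟨fun hXY => ?_, le_galoisDual_comm hcard he⟩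
  simpa [Nat.sub_sub_self he] using le_galoisDual_comm hcard (Nat.sub_le h e) hXY

end FiniteField

theorem galois_selfDual_tfae_general
    (p h : ℕ) (hp : p.Prime)
    [Field F] [Fintype F] (hcard : Fintype.card F = p ^ h)
    (n k e : ℕ) (he : e ≤ h - 1)
    (C : Submodule F (Fin n → F)) (hk : Module.finrank F C = k)
    (G : Matrix (Fin k) (Fin n) F) (hG : IsGenMatrix C G)
    (H : Matrix (Fin (n - k)) (Fin n) F) (hH : IsGenMatrix (galoisDual p 0 C) H) :
    List.TFAE
      [C = galoisDual p e C,
       C = galoisDual p (h - e) C,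
       G * (G.transpose.map fun a => a ^ p ^ e) = 0 ∧
         (H.map fun a => a ^ p ^ (h - e)) *
           (H.transpose.map fun a => a ^ p ^ (2 * h - 2 * e)) = 0,
       G * (G.transpose.map fun a => a ^ p ^ e) = 0 ∧
         (H.map fun a => a ^ p ^ (h - e)) * H.transpose = 0,
       G * (G.transpose.map fun a => a ^ p ^ (h - e)) = 0 ∧
         (H.map fun a => a ^ p ^ (h - e)) *
           (H.transpose.map fun a => a ^ p ^ (2 * h - 2 * e)) = 0,
       G * (G.transpose.map fun a => a ^ p ^ (h - e)) = 0 ∧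
         (H.map fun a => a ^ p ^ (h - e)) * H.transpose = 0] := by
  have : Fact p.Prime := ⟨hp⟩
  have := FiniteField.charP_of_card_eq_prime_pow hp hcard
  have heh : e ≤ h := he.trans (Nat.sub_le h 1)
  set D := galoisDual p 0 C
  have hC_sub : C ≤ galoisDual p (h - e) C ↔ C ≤ galoisDual p e C :=
    le_galoisDual_sub_iff hcard heh
  have hD_sub : D ≤ galoisDual p (h - e) D ↔ D ≤ galoisDual p e D :=
    le_galoisDual_sub_iff hcard heh
  have hG_iff (t : ℕ) : G * (G.transpose.map fun a => a ^ p ^ t) = 0 ↔ C ≤ galoisDual p t C :=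
    (le_galoisDual_iff_mul_eq_zero hG.2 hG.2).symm
  have hH_iff : (H.map fun a => a ^ p ^ (h - e)) * H.transpose = 0 ↔ D ≤ galoisDual p e D := by
    rw [Matrix.map_mul_transpose_eq_zero_iff, ← le_galoisDual_iff_mul_eq_zero hH.2 hH.2, hD_sub]
  have hH_iff' : (H.map fun a => a ^ p ^ (h - e)) *
      (H.transpose.map fun a => a ^ p ^ (2 * h - 2 * e)) = 0 ↔ D ≤ galoisDual p e D := by
    rw [show 2 * h - 2 * e = (h - e) + (h - e) by omega, map_pow_mul_map_pow_add_eq_zero_iff,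
      ← le_galoisDual_iff_mul_eq_zero hH.2 hH.2, hD_sub]
  have hself := eq_galoisDual_iff (e := e) hk hG hH
  have hself_sub : C = galoisDual p (h - e) C ↔ C ≤ galoisDual p e C ∧ D ≤ galoisDual p e D := by
    rw [eq_galoisDual_iff hk hG hH, hC_sub, hD_sub]
  refine List.tfae_of_forall (C ≤ galoisDual p e C ∧ D ≤ galoisDual p e D) _ ?_
  simp only [List.mem_cons, List.not_mem_nil, or_false]
  rintro _ (rfl | rfl | rfl | rfl | rfl | rfl)
  exacts [hself, hself_sub, and_congr (hG_iff e) hH_iff', and_congr (hG_iff e) hH_iff,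
    and_congr ((hG_iff _).trans hC_sub) hH_iff', and_congr ((hG_iff _).trans hC_sub) hH_iff]

/-- Corollary: for any generator matrix `G` and parity check matrix `H` of the `k`-dimensional
code `C`, the following are equivalent: (1) `C` is `e`-Galois self-dual; (2) `C` is
`(h-e)`-Galois self-dual; (3) `G·σ^e(Gᵀ) = 0` and `σ^{h-e}(H)·σ^{2h-2e}(Hᵀ) = 0`;
(4) `G·σ^e(Gᵀ) = 0` and `σ^{h-e}(H)·Hᵀ = 0`; (5) `G·σ^{h-e}(Gᵀ) = 0` and
`σ^{h-e}(H)·σ^{2h-2e}(Hᵀ) = 0`; (6) `G·σ^{h-e}(Gᵀ) = 0` and `σ^{h-e}(H)·Hᵀ = 0`. -/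
theorem galois_selfDual_tfae
    (p h : ℕ) (hp : p.Prime) (hh : 0 < h)
    [Field F] [Fintype F] (hcard : Fintype.card F = p ^ h)
    (n k e : ℕ) (he : e ≤ h - 1)
    (C : Submodule F (Fin n → F)) (hk : Module.finrank F C = k)
    (G : Matrix (Fin k) (Fin n) F) (hG : IsGenMatrix C G)
    (H : Matrix (Fin (n - k)) (Fin n) F) (hH : IsGenMatrix (galoisDual p 0 C) H) :
    List.TFAE
      [C = galoisDual p e C,
       C = galoisDual p (h - e) C,
       G * (G.transpose.map fun a => a ^ p ^ e) = 0 ∧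
         (H.map fun a => a ^ p ^ (h - e)) *
           (H.transpose.map fun a => a ^ p ^ (2 * h - 2 * e)) = 0,
       G * (G.transpose.map fun a => a ^ p ^ e) = 0 ∧
         (H.map fun a => a ^ p ^ (h - e)) * H.transpose = 0,
       G * (G.transpose.map fun a => a ^ p ^ (h - e)) = 0 ∧
         (H.map fun a => a ^ p ^ (h - e)) *
           (H.transpose.map fun a => a ^ p ^ (2 * h - 2 * e)) = 0,
       G * (G.transpose.map fun a => a ^ p ^ (h - e)) = 0 ∧
         (H.map fun a => a ^ p ^ (h - e)) * H.transpose = 0] :=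
  galois_selfDual_tfae_general p h hp hcard n k e he C hk G hG H hH
end
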